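/- arXiv:1507.03523 — 3 statements merged into one kernel-verified Lean document; each statement's English description precedes it below -/
import Mathlib

section
/- For all polynomials f, g ∈ ℂ[x^0,…,x^d], the canonical Poisson bracket of their pullbacks satisfies {φ(f), φ(g)} = i · φ( Σ_{k=1}^d x^k ( ∂_0 f · ∂_k g − ∂_k f · ∂_0 g ) ). In particular, the image of φ is a Poisson subalgebra of P, and the induced bracket on ℂ[x^0,…,x^d] is the κ-Minkowski Poisson bracket {f, g} = ∂_μ f ∂_ν g · i c^{μν}_ρ x^ρ with structure constants c^{0k}_k = 1 = −c^{k0}_k (all other components zero). -/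
open MvPolynomial

/-- The canonical Poisson bracket on `P = ℂ[z^1,…,z^d, w^1,…,w^d]`
(`Sum.inl j` indexing `z^j`, `Sum.inr j` indexing `w^j = z̄^j`):
`{F, G} = i·Σ_j (∂_{z^j}F · ∂_{w^j}G − ∂_{w^j}F · ∂_{z^j}G)`. -/
noncomputable def canonicalPoisson (d : ℕ)
    (F G : MvPolynomial (Fin d ⊕ Fin d) ℂ) : MvPolynomial (Fin d ⊕ Fin d) ℂ :=
  C Complex.I * ∑ j : Fin d,
    (pderiv (Sum.inl j) F * pderiv (Sum.inr j) G -
     pderiv (Sum.inr j) F * pderiv (Sum.inl j) G)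

/-- The algebra homomorphism `φ : ℂ[x⁰,…,x^d] → P` with `φ(x⁰) = Σ_i w^i z^i`
and `φ(x^k) = w^k` for `k = 1,…,d`. -/
noncomputable def phiC (d : ℕ) :
    MvPolynomial (Fin (d + 1)) ℂ →ₐ[ℂ] MvPolynomial (Fin d ⊕ Fin d) ℂ :=
  aeval (Fin.cases (∑ i : Fin d, X (Sum.inr i) * X (Sum.inl i))
    (fun k : Fin d => X (Sum.inr k)))

lemma phiC_X_zero (d : ℕ) :
    phiC d (X 0) = ∑ i : Fin d, X (Sum.inr i) * X (Sum.inl i) := by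
  simp [phiC]

lemma phiC_X_succ (d : ℕ) (k : Fin d) : phiC d (X k.succ) = X (Sum.inr k) := by
  simp [phiC]

lemma pderiv_inl_phiC_X (d : ℕ) (j : Fin d) (n : Fin (d + 1)) :
    pderiv (Sum.inl j) (phiC d (X n)) = phiC d (pderiv 0 (X n)) * X (Sum.inr j) := by
  induction n using Fin.cases with
  | zero =>
    simp [phiC_X_zero, pderiv_X, Pi.single_apply, Finset.mul_sum, Finset.sum_ite_eq,
      mul_comm]
  | succ k =>
    simp [phiC_X_succ, pderiv_X_of_ne (Fin.succ_ne_zero k), pderiv_X]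

lemma pderiv_inr_phiC_X (d : ℕ) (j : Fin d) (n : Fin (d + 1)) :
    pderiv (Sum.inr j) (phiC d (X n)) =
      phiC d (pderiv 0 (X n)) * X (Sum.inl j) + phiC d (pderiv j.succ (X n)) := by
  induction n using Fin.cases with
  | zero =>
    simp [phiC_X_zero, pderiv_X, Pi.single_apply, Finset.mul_sum, Finset.sum_ite_eq,
      pderiv_X_of_ne (Fin.succ_ne_zero j).symm, mul_comm]
  | succ k =>
    simp [phiC_X_succ, pderiv_X_of_ne (Fin.succ_ne_zero k), pderiv_X, Pi.single_apply,
      Fin.succ_inj, eq_comm]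

lemma pderiv_inl_phiC (d : ℕ) (j : Fin d) (f : MvPolynomial (Fin (d + 1)) ℂ) :
    pderiv (Sum.inl j) (phiC d f) = phiC d (pderiv 0 f) * X (Sum.inr j) := by
  induction f using MvPolynomial.induction_on with
  | C a => simp [phiC]
  | add p q hp hq => simp [map_add, hp, hq, add_mul]
  | mul_X p n hp =>
    simp only [map_mul, pderiv_mul, hp, pderiv_inl_phiC_X, map_add]
    ring

lemma pderiv_inr_phiC (d : ℕ) (j : Fin d) (f : MvPolynomial (Fin (d + 1)) ℂ) :
    pderiv (Sum.inr j) (phiC d f) =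
      phiC d (pderiv 0 f) * X (Sum.inl j) + phiC d (pderiv j.succ f) := by
  induction f using MvPolynomial.induction_on with
  | C a => simp [phiC]
  | add p q hp hq => simp only [map_add, hp, hq]; ring
  | mul_X p n hp =>
    simp only [map_mul, pderiv_mul, hp, pderiv_inr_phiC_X, map_add]
    ring

/-- `{φ(f), φ(g)} = i · φ( Σ_k x^k (∂₀f ∂_k g − ∂_k f ∂₀g) )`;
in particular the image of `φ` is a Poisson subalgebra of `P` and the induced
bracket on `ℂ[x⁰,…,x^d]` is the κ-Minkowski Poisson bracket. -/
theorem poisson_subalgebra_kappaMinkowski (d : ℕ) (hd : 1 ≤ d) :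
    (∀ f g : MvPolynomial (Fin (d + 1)) ℂ,
      canonicalPoisson d (phiC d f) (phiC d g) =
        C Complex.I * phiC d (∑ k : Fin d, X k.succ *
          (pderiv 0 f * pderiv k.succ g - pderiv k.succ f * pderiv 0 g))) ∧
    (∀ f g : MvPolynomial (Fin (d + 1)) ℂ,
      ∃ h : MvPolynomial (Fin (d + 1)) ℂ,
        canonicalPoisson d (phiC d f) (phiC d g) = phiC d h) := by
  have main : ∀ f g : MvPolynomial (Fin (d + 1)) ℂ,
      canonicalPoisson d (phiC d f) (phiC d g) =
        C Complex.I * phiC d (∑ k : Fin d, X k.succ *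
          (pderiv 0 f * pderiv k.succ g - pderiv k.succ f * pderiv 0 g)) := by
    intro f g
    unfold canonicalPoisson
    congr 1
    rw [map_sum]
    refine Finset.sum_congr rfl fun j _ => ?_
    simp only [pderiv_inl_phiC, pderiv_inr_phiC, map_mul, map_sub, phiC_X_succ]
    ring
  refine ⟨main, fun f g => ?_⟩
  refine ⟨C Complex.I * ∑ k : Fin d, X k.succ *
      (pderiv 0 f * pderiv k.succ g - pderiv k.succ f * pderiv 0 g), ?_⟩
  rw [main f g, map_mul]
  congr 1
  simp [algebraMap_eq]
end

section
/- For all polynomials f, g ∈ A, one has φ(f ⋆ g) = φ(f) ⋆_WV φ(g). In other words, the algebra homomorphism φ intertwines the κ-Minkowski star product on A with the Wick–Voros star product on B, so that the κ-Minkowski star product is induced by the symplectic realization x^0 = Σ_i w^i z^i, x^k = w^k. -/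
open MvPolynomial

/-- Iterated partial derivative along a list of variable indices. -/
noncomputable def pdList {σ : Type*} [DecidableEq σ] (l : List σ)
    (f : MvPolynomial σ ℝ) : MvPolynomial σ ℝ :=
  l.foldr (fun i h => pderiv i h) f

/-- The `n`-th order operator `g ↦ Σ_{μ_1,…,μ_n} x^{μ_1}⋯x^{μ_n} ∂_{μ_1}⋯∂_{μ_n} g`. -/
noncomputable def multiEuler (d n : ℕ) (g : MvPolynomial (Fin (d + 1)) ℝ) :
    MvPolynomial (Fin (d + 1)) ℝ :=
  ∑ μ : Fin n → Fin (d + 1), (∏ j : Fin n, X (μ j)) * pdList (List.ofFn μ) g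

/-- The κ-Minkowski star product on `A = ℝ[x⁰,…,x^d]`:
`f ⋆ g = Σ_{n≥0} (θⁿ/n!) (∂₀ⁿ f) · (Σ_{μ_1,…,μ_n} x^{μ_1}⋯x^{μ_n} ∂_{μ_1}⋯∂_{μ_n} g)`;
on polynomials only finitely many terms are nonzero, so the sum is a `finsum`. -/
noncomputable def kstar (d : ℕ) (θ : ℝ)
    (f g : MvPolynomial (Fin (d + 1)) ℝ) : MvPolynomial (Fin (d + 1)) ℝ :=
  ∑ᶠ n : ℕ, (θ ^ n / (n.factorial : ℝ)) •
    ((fun h => pderiv (0 : Fin (d + 1)) h)^[n] f * multiEuler d n g)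

/-- The Wick–Voros star product on `B = ℝ[z^1,…,z^d,w^1,…,w^d]`
(`Sum.inl i` indexing `z^i`, `Sum.inr i` indexing `w^i`):
`f ⋆_WV g = Σ_{n≥0} (θⁿ/n!) Σ_{i_1,…,i_n} (∂_{z^{i_1}}⋯∂_{z^{i_n}} f)·(∂_{w^{i_1}}⋯∂_{w^{i_n}} g)`. -/
noncomputable def wvstar (d : ℕ) (θ : ℝ)
    (f g : MvPolynomial (Fin d ⊕ Fin d) ℝ) : MvPolynomial (Fin d ⊕ Fin d) ℝ :=
  ∑ᶠ n : ℕ, (θ ^ n / (n.factorial : ℝ)) •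
    ∑ i : Fin n → Fin d,
      pdList (List.ofFn fun j => Sum.inl (i j)) f *
      pdList (List.ofFn fun j => Sum.inr (i j)) g

/-- The algebra homomorphism `φ : ℝ[x⁰,…,x^d] → ℝ[z^1,…,z^d,w^1,…,w^d]` with
`φ(x⁰) = Σ_i w^i z^i` and `φ(x^k) = w^k` for `k = 1,…,d`. -/
noncomputable def phiR (d : ℕ) :
    MvPolynomial (Fin (d + 1)) ℝ →ₐ[ℝ] MvPolynomial (Fin d ⊕ Fin d) ℝ :=
  aeval (Fin.cases (∑ i : Fin d, X (Sum.inr i) * X (Sum.inl i))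
    (fun k : Fin d => X (Sum.inr k)))

section aux
variable {σ : Type*} [DecidableEq σ]

lemma pdList_nil (f : MvPolynomial σ ℝ) : pdList ([] : List σ) f = f := rfl

lemma pdList_cons (a : σ) (l : List σ) (f : MvPolynomial σ ℝ) :
    pdList (a :: l) f = pderiv a (pdList l f) := rfl

lemma pderiv_comm' (i j : σ) (f : MvPolynomial σ ℝ) :
    pderiv i (pderiv j f) = pderiv j (pderiv i f) := by
  induction f using MvPolynomial.induction_on with
  | C a => simp
  | add p q hp hq => simp [hp, hq]
  | mul_X p n hp =>
    have h1 : ∀ a b : σ, pderiv a (pderiv b (X n : MvPolynomial σ ℝ)) = 0 := by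
      intro a b
      rcases eq_or_ne n b with rfl | h
      · simp
      · simp [pderiv_X_of_ne h]
    simp only [pderiv_mul, map_add, hp, h1, mul_zero, add_zero]
    ring

lemma pdList_pderiv (l : List σ) (a : σ) (f : MvPolynomial σ ℝ) :
    pderiv a (pdList l f) = pdList l (pderiv a f) := by
  induction l with
  | nil => rfl
  | cons b t ih => rw [pdList_cons, pderiv_comm', ih, pdList_cons]

lemma pdList_add (l : List σ) (f g : MvPolynomial σ ℝ) :
    pdList l (f + g) = pdList l f + pdList l g := by
  induction l with
  | nil => rfl
  | cons b t ih => rw [pdList_cons, pdList_cons, pdList_cons, ih, map_add]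

lemma pderiv_prod_X_ne (s : σ) {n : ℕ} (t : Fin n → σ) (h : ∀ j, t j ≠ s) :
    pderiv s (∏ j, (X (t j) : MvPolynomial σ ℝ)) = 0 := by
  induction n with
  | zero => simp
  | succ m ih =>
    rw [Fin.prod_univ_succ, pderiv_mul, pderiv_X_of_ne (h 0),
      ih (fun j => t j.succ) (fun j => h j.succ)]
    simp

lemma pderiv_td_zero (i : σ) (f : MvPolynomial σ ℝ) (h : f.totalDegree = 0) :
    pderiv i f = 0 := by
  apply pderiv_eq_zero_of_notMem_vars
  rw [mem_vars]
  rintro ⟨m, hm, hi⟩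
  have := (totalDegree_eq_zero_iff σ f).mp h m hm i
  simp [Finsupp.mem_support_iff] at hi
  exact hi this

lemma td_pderiv_le (i : σ) (f : MvPolynomial σ ℝ) :
    (pderiv i f).totalDegree ≤ f.totalDegree - 1 := by
  conv_lhs => rw [f.as_sum]
  rw [map_sum]
  refine (totalDegree_finset_sum _ _).trans (Finset.sup_le fun m hm => ?_)
  rw [pderiv_monomial]
  rcases eq_or_ne (m i) 0 with h0 | h0
  · simp [h0]
  · refine (totalDegree_monomial_le _ _).trans ?_
    show (m - Finsupp.single i 1).sum (fun _ e => e) ≤ f.totalDegree - 1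
    have h1 : (m - Finsupp.single i 1) + Finsupp.single i 1 = m :=
      tsub_add_cancel_of_le (Finsupp.single_le_iff.mpr (Nat.one_le_iff_ne_zero.mpr h0))
    have h2 : (m - Finsupp.single i 1).sum (fun _ e => e) + 1 = m.sum (fun _ e => e) := by
      conv_rhs => rw [← h1]
      rw [Finsupp.sum_add_index' (fun _ => rfl) (fun _ _ _ => rfl)]
      rw [Finsupp.sum_single_index rfl]
    have h3 : m.sum (fun _ e => e) ≤ f.totalDegree := le_totalDegree hm
    omega

lemma iterate_pderiv_eq_zero (i : σ) :
    ∀ (n : ℕ) (f : MvPolynomial σ ℝ), f.totalDegree < n →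
      (fun h => pderiv i h)^[n] f = 0 := by
  intro n
  induction n with
  | zero => intro f hf; omega
  | succ n ih =>
    intro f hf
    rw [Function.iterate_succ_apply]
    rcases Nat.eq_zero_or_pos n with rfl | hn
    · have h0 : f.totalDegree = 0 := by omega
      simp [pderiv_td_zero i f h0]
    · apply ih
      have := td_pderiv_le i f
      omega

lemma iterate_pderiv_zero (i : σ) (n : ℕ) :
    (fun h => pderiv i h)^[n] (0 : MvPolynomial σ ℝ) = 0 := by
  apply Function.iterate_fixed
  simp

end aux

variable {d : ℕ}

lemma phiR_X_zero : phiR d (X 0) = ∑ i : Fin d, X (Sum.inr i) * X (Sum.inl i) := by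
  simp [phiR]

lemma phiR_X_succ (k : Fin d) : phiR d (X k.succ) = X (Sum.inr k) := by
  simp [phiR]

lemma pderiv_phiR (s : Fin d ⊕ Fin d) (f : MvPolynomial (Fin (d + 1)) ℝ) :
    pderiv s (phiR d f) =
      ∑ μ : Fin (d + 1), phiR d (pderiv μ f) * pderiv s (phiR d (X μ)) := by
  induction f using MvPolynomial.induction_on with
  | C a => simp
  | add p q hp hq =>
    simp only [map_add, hp, hq, add_mul, Finset.sum_add_distrib]
  | mul_X p n hp =>
    rw [map_mul, pderiv_mul, hp]
    have key : ∀ μ : Fin (d + 1),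
        phiR d (pderiv μ (p * X n)) * pderiv s (phiR d (X μ)) =
          phiR d (pderiv μ p) * pderiv s (phiR d (X μ)) * phiR d (X n) +
          phiR d p * (phiR d (pderiv μ (X n)) * pderiv s (phiR d (X μ))) := by
      intro μ
      rw [pderiv_mul, map_add, map_mul, map_mul]
      ring
    rw [Finset.sum_congr rfl fun μ _ => key μ, Finset.sum_add_distrib, ← Finset.sum_mul,
      ← Finset.mul_sum]
    congr 1
    rw [Finset.sum_eq_single n]
    · rw [pderiv_X_self, map_one, one_mul]
    · intro μ _ hμ
      rw [pderiv_X_of_ne (Ne.symm hμ), map_zero, zero_mul]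
    · intro h
      exact absurd (Finset.mem_univ n) h

lemma pderiv_inl_phiR (i : Fin d) (f : MvPolynomial (Fin (d + 1)) ℝ) :
    pderiv (Sum.inl i) (phiR d f) = phiR d (pderiv 0 f) * X (Sum.inr i) := by
  rw [pderiv_phiR, Fin.sum_univ_succ]
  have h0 : pderiv (Sum.inl i : Fin d ⊕ Fin d) (phiR d (X 0)) = X (Sum.inr i) := by
    rw [phiR_X_zero, map_sum]
    rw [Finset.sum_eq_single i]
    · rw [pderiv_mul, pderiv_X_of_ne (by simp), pderiv_X_self]
      ring
    · intro j _ hj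
      rw [pderiv_mul, pderiv_X_of_ne (by simp), pderiv_X_of_ne (by simp [hj])]
      ring
    · intro h; exact absurd (Finset.mem_univ i) h
  have hk : ∀ k : Fin d, pderiv (Sum.inl i : Fin d ⊕ Fin d) (phiR d (X k.succ)) = 0 := by
    intro k
    rw [phiR_X_succ, pderiv_X_of_ne (by simp)]
  simp [h0, hk]

lemma pderiv_inr_phiR (i : Fin d) (f : MvPolynomial (Fin (d + 1)) ℝ) :
    pderiv (Sum.inr i) (phiR d f) =
      X (Sum.inl i) * phiR d (pderiv 0 f) + phiR d (pderiv i.succ f) := by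
  rw [pderiv_phiR, Fin.sum_univ_succ]
  have h0 : pderiv (Sum.inr i : Fin d ⊕ Fin d) (phiR d (X 0)) = X (Sum.inl i) := by
    rw [phiR_X_zero, map_sum]
    rw [Finset.sum_eq_single i]
    · rw [pderiv_mul, pderiv_X_self, pderiv_X_of_ne (by simp)]
      ring
    · intro j _ hj
      rw [pderiv_mul, pderiv_X_of_ne (by simp [hj]), pderiv_X_of_ne (by simp)]
      ring
    · intro h; exact absurd (Finset.mem_univ i) h
  have hk : ∀ k : Fin d, pderiv (Sum.inr i : Fin d ⊕ Fin d) (phiR d (X k.succ)) =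
      if k = i then 1 else 0 := by
    intro k
    rcases eq_or_ne k i with rfl | h
    · rw [phiR_X_succ, pderiv_X_self, if_pos rfl]
    · rw [phiR_X_succ, pderiv_X_of_ne (by simp [h]), if_neg h]
  rw [h0]
  rw [Finset.sum_congr rfl fun k _ => by rw [hk k]]
  simp [mul_comm]


lemma sum_pi_succ {α M : Type*} [Fintype α] [DecidableEq α] [AddCommMonoid M] {n : ℕ}
    (F : (Fin (n + 1) → α) → M) :
    ∑ i : Fin (n + 1) → α, F i = ∑ a : α, ∑ i : Fin n → α, F (Fin.cons a i) := by
  calc ∑ i : Fin (n + 1) → α, F i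
      = ∑ p : α × (Fin n → α), F (Fin.cons p.1 p.2) :=
        (Fintype.sum_equiv (Fin.consEquiv fun _ => α) _ _ fun p => rfl).symm
    _ = ∑ a : α, ∑ i : Fin n → α, F (Fin.cons a i) := Fintype.sum_prod_type _

lemma multiEuler_succ (n : ℕ) (g : MvPolynomial (Fin (d + 1)) ℝ) :
    multiEuler d (n + 1) g = ∑ μ0 : Fin (d + 1), X μ0 * multiEuler d n (pderiv μ0 g) := by
  rw [multiEuler, sum_pi_succ]
  refine Finset.sum_congr rfl fun μ0 _ => ?_
  rw [multiEuler, Finset.mul_sum]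
  refine Finset.sum_congr rfl fun μ _ => ?_
  rw [List.ofFn_succ]
  simp only [Fin.cons_zero, Fin.cons_succ]
  rw [pdList_cons, pdList_pderiv, Fin.prod_univ_succ]
  simp only [Fin.cons_zero, Fin.cons_succ]
  ring

lemma zside (n : ℕ) (i : Fin n → Fin d) (f : MvPolynomial (Fin (d + 1)) ℝ) :
    pdList (List.ofFn fun j => (Sum.inl (i j) : Fin d ⊕ Fin d)) (phiR d f) =
      phiR d ((fun h => pderiv (0 : Fin (d + 1)) h)^[n] f) * ∏ j : Fin n, X (Sum.inr (i j)) := by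
  induction n generalizing f with
  | zero => simp [pdList_nil, List.ofFn_zero]
  | succ n ih =>
    rw [List.ofFn_succ, pdList_cons, ih (fun j => i j.succ) f, pderiv_mul,
      pderiv_prod_X_ne _ _ (fun j => by simp), mul_zero, add_zero, pderiv_inl_phiR,
      Fin.prod_univ_succ]
    have hit : (fun h => pderiv (0 : Fin (d + 1)) h)^[n + 1] f =
        pderiv 0 ((fun h => pderiv (0 : Fin (d + 1)) h)^[n] f) :=
      Function.iterate_succ_apply' _ _ _
    rw [hit]
    ring

lemma pdList_inr_inl_mul (n : ℕ) (i : Fin n → Fin d) (k : Fin d)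
    (h : MvPolynomial (Fin d ⊕ Fin d) ℝ) :
    pdList (List.ofFn fun j => (Sum.inr (i j) : Fin d ⊕ Fin d)) (X (Sum.inl k) * h) =
      X (Sum.inl k) * pdList (List.ofFn fun j => (Sum.inr (i j) : Fin d ⊕ Fin d)) h := by
  induction n generalizing h with
  | zero => simp [pdList_nil, List.ofFn_zero]
  | succ n ih =>
    rw [List.ofFn_succ, pdList_cons, pdList_cons, ih (fun j => i j.succ) h, pderiv_mul,
      pderiv_X_of_ne (by simp), zero_mul, zero_add]

lemma wside (n : ℕ) (g : MvPolynomial (Fin (d + 1)) ℝ) :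
    ∑ i : Fin n → Fin d, (∏ j : Fin n, X (Sum.inr (i j))) *
        pdList (List.ofFn fun j => (Sum.inr (i j) : Fin d ⊕ Fin d)) (phiR d g) =
      phiR d (multiEuler d n g) := by
  induction n generalizing g with
  | zero =>
    rw [multiEuler]
    simp [pdList_nil, List.ofFn_zero]
  | succ n ih =>
    rw [sum_pi_succ]
    have step : ∀ i0 : Fin d,
        ∑ i : Fin n → Fin d, (∏ j : Fin (n + 1), X (Sum.inr ((Fin.cons i0 i : Fin (n + 1) → Fin d) j))) *
            pdList (List.ofFn fun j => (Sum.inr ((Fin.cons i0 i : Fin (n + 1) → Fin d) j) : Fin d ⊕ Fin d)) (phiR d g) =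
          X (Sum.inr i0) * X (Sum.inl i0) * phiR d (multiEuler d n (pderiv 0 g)) +
            X (Sum.inr i0) * phiR d (multiEuler d n (pderiv i0.succ g)) := by
      intro i0
      have inner : ∀ i : Fin n → Fin d,
          (∏ j : Fin (n + 1), X (Sum.inr ((Fin.cons i0 i : Fin (n + 1) → Fin d) j))) *
              pdList (List.ofFn fun j => (Sum.inr ((Fin.cons i0 i : Fin (n + 1) → Fin d) j) : Fin d ⊕ Fin d)) (phiR d g) =
            X (Sum.inr i0) * X (Sum.inl i0) *
                ((∏ j : Fin n, X (Sum.inr (i j))) *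
                  pdList (List.ofFn fun j => (Sum.inr (i j) : Fin d ⊕ Fin d)) (phiR d (pderiv 0 g))) +
              X (Sum.inr i0) *
                ((∏ j : Fin n, X (Sum.inr (i j))) *
                  pdList (List.ofFn fun j => (Sum.inr (i j) : Fin d ⊕ Fin d))
                    (phiR d (pderiv i0.succ g))) := by
        intro i
        rw [List.ofFn_succ]
        simp only [Fin.cons_zero, Fin.cons_succ]
        rw [pdList_cons, pdList_pderiv, pderiv_inr_phiR, pdList_add, pdList_inr_inl_mul,
          Fin.prod_univ_succ]
        simp only [Fin.cons_zero, Fin.cons_succ]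
        ring
      rw [Finset.sum_congr rfl fun i _ => inner i, Finset.sum_add_distrib, ← Finset.mul_sum,
        ← Finset.mul_sum, ih (pderiv 0 g), ih (pderiv i0.succ g)]
    rw [Finset.sum_congr rfl fun i0 _ => step i0, Finset.sum_add_distrib, multiEuler_succ,
      map_sum, Fin.sum_univ_succ]
    congr 1
    · rw [map_mul, phiR_X_zero, Finset.sum_mul]
    · refine Finset.sum_congr rfl fun i0 _ => ?_
      rw [map_mul, phiR_X_succ]

/-- `φ(f ⋆ g) = φ(f) ⋆_WV φ(g)`: the κ-Minkowski star product is
induced by the symplectic realization `x⁰ = Σ_i w^i z^i`, `x^k = w^k`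
from the Wick–Voros star product. -/
theorem phi_intertwines_kstar_wvstar (d : ℕ) (hd : 1 ≤ d) (θ : ℝ)
    (f g : MvPolynomial (Fin (d + 1)) ℝ) :
    phiR d (kstar d θ f g) = wvstar d θ (phiR d f) (phiR d g) := by
  have hfin : (Function.support fun n : ℕ => (θ ^ n / (n.factorial : ℝ)) •
      ((fun h => pderiv (0 : Fin (d + 1)) h)^[n] f * multiEuler d n g)).Finite := by
    apply Set.Finite.subset (Set.finite_Icc 0 f.totalDegree)
    intro n hn
    simp only [Function.mem_support] at hn
    by_contra hc
    simp only [Set.mem_Icc, not_and, not_le, Nat.zero_le, true_implies] at hc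
    exact hn (by rw [iterate_pderiv_eq_zero 0 n f hc, zero_mul, smul_zero])
  rw [kstar]
  rw [show (phiR d) (∑ᶠ n : ℕ, (θ ^ n / (n.factorial : ℝ)) •
        ((fun h => pderiv (0 : Fin (d + 1)) h)^[n] f * multiEuler d n g)) =
      ∑ᶠ n : ℕ, phiR d ((θ ^ n / (n.factorial : ℝ)) •
        ((fun h => pderiv (0 : Fin (d + 1)) h)^[n] f * multiEuler d n g)) from
    AddMonoidHom.map_finsum (phiR d).toLinearMap.toAddMonoidHom hfin, wvstar]
  refine finsum_congr fun n => ?_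
  show phiR d ((θ ^ n / (n.factorial : ℝ)) •
      ((fun h => pderiv (0 : Fin (d + 1)) h)^[n] f * multiEuler d n g)) = _
  have key : ∀ i : Fin n → Fin d,
      pdList (List.ofFn fun j => Sum.inl (i j)) (phiR d f) *
        pdList (List.ofFn fun j => Sum.inr (i j)) (phiR d g) =
      phiR d ((fun h => pderiv (0 : Fin (d + 1)) h)^[n] f) *
        ((∏ j : Fin n, X (Sum.inr (i j))) *
          pdList (List.ofFn fun j => Sum.inr (i j)) (phiR d g)) := by
    intro i
    rw [zside]
    ring
  rw [map_smul, map_mul, ← wside n g, Finset.mul_sum,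
    Finset.sum_congr rfl fun i _ => (key i).symm]
end

section
/- Let d ≥ 1, let U = ℝ × (ℝ^d ∖ {0}) ⊆ ℝ^{d+1} with coordinates (x^0, x^1, …, x^d), and let h : U → ℝ be continuously differentiable with ∂_0 h = 0 and Σ_{k=1}^d x^k ∂_k h = −d·h on U. Then the first-order cyclicity condition holds: for all smooth compactly supported functions f, g : U → ℝ, ∫_U h(x) · Σ_{k=1}^d x^k ( ∂_0 f · ∂_k g − ∂_k f · ∂_0 g ) dx = 0. -/
open MeasureTheory Function

section BasicRules

variable {E : Type*} [NormedAddCommGroup E] [NormedSpace ℝ E]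
  {a b : E → ℝ} {x v : E}

private lemma Dmul (ha : DifferentiableAt ℝ a x) (hb : DifferentiableAt ℝ b x) :
    fderiv ℝ (fun y => a y * b y) x v = fderiv ℝ a x v * b x + a x * fderiv ℝ b x v := by
  rw [fderiv_fun_mul ha hb, ContinuousLinearMap.add_apply, ContinuousLinearMap.smul_apply,
    ContinuousLinearMap.smul_apply, smul_eq_mul, smul_eq_mul]
  ring

private lemma Dsub (ha : DifferentiableAt ℝ a x) (hb : DifferentiableAt ℝ b x) :
    fderiv ℝ (fun y => a y - b y) x v = fderiv ℝ a x v - fderiv ℝ b x v := by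
  rw [fderiv_fun_sub ha hb, ContinuousLinearMap.sub_apply]

private lemma Dsum {ι : Type*} {s : Finset ι} {A : ι → E → ℝ}
    (hA : ∀ i ∈ s, DifferentiableAt ℝ (A i) x) :
    fderiv ℝ (fun y => ∑ i ∈ s, A i y) x v = ∑ i ∈ s, fderiv ℝ (A i) x v := by
  rw [fderiv_fun_sum hA, ContinuousLinearMap.sum_apply]

end BasicRules

private lemma Dproj {n : ℕ} (i : Fin n) (x v : Fin n → ℝ) :
    fderiv ℝ (fun y : Fin n → ℝ => y i) x v = v i := by
  have h : fderiv ℝ (⇑(ContinuousLinearMap.proj i : (Fin n → ℝ) →L[ℝ] ℝ)) x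
      = (ContinuousLinearMap.proj i : (Fin n → ℝ) →L[ℝ] ℝ) :=
    ContinuousLinearMap.fderiv _
  exact congrFun (congrArg _ h) v

private lemma diffproj {n : ℕ} (i : Fin n) (x : Fin n → ℝ) :
    DifferentiableAt ℝ (fun y : Fin n → ℝ => y i) x :=
  (ContinuousLinearMap.proj i : (Fin n → ℝ) →L[ℝ] ℝ).differentiableAt

private lemma contDiff_top_fderiv_apply {n : ℕ} {u : (Fin n → ℝ) → ℝ}
    (hu : ContDiff ℝ (⊤ : ℕ∞) u) (v : Fin n → ℝ) :
    ContDiff ℝ (⊤ : ℕ∞) fun x => fderiv ℝ u x v :=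
  (hu.fderiv_right (by simp)).clm_apply contDiff_const

private lemma Dswap {n : ℕ} {u : (Fin n → ℝ) → ℝ} (hu : ContDiff ℝ (⊤ : ℕ∞) u)
    (x v w : Fin n → ℝ) :
    fderiv ℝ (fun y => fderiv ℝ u y w) x v = fderiv ℝ (fun y => fderiv ℝ u y v) x w := by
  have hdu : Differentiable ℝ (fderiv ℝ u) :=
    (hu.fderiv_right (m := 1) (by exact WithTop.coe_le_coe.mpr le_top)).differentiable one_ne_zero
  have key : ∀ a b : Fin n → ℝ,
      fderiv ℝ (fun y => fderiv ℝ u y a) x b = fderiv ℝ (fderiv ℝ u) x b a := by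
    intro a b
    rw [fderiv_clm_apply (hdu x) (differentiableAt_const a)]
    simp
  rw [key, key]
  exact (hu.contDiffAt.isSymmSndFDerivAt (by simp; exact WithTop.coe_le_coe.mpr le_top)) v w

private lemma fderiv_dir_integrable {n : ℕ} {w : (Fin n → ℝ) → ℝ}
    (hw : ContDiff ℝ 1 w) (hwc : HasCompactSupport w) (v : Fin n → ℝ) :
    Integrable (fun x => fderiv ℝ w x v) := by
  have hcont : Continuous fun x => fderiv ℝ w x v :=
    (hw.continuous_fderiv one_ne_zero).clm_apply continuous_const
  have hsupp : HasCompactSupport fun x => fderiv ℝ w x v := by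
    apply HasCompactSupport.intro hwc
    intro x hx
    have h0 : fderiv ℝ w x = 0 :=
      notMem_support.mp fun hs => hx (support_fderiv_subset ℝ hs)
    simp [h0]
  exact hcont.integrable_of_hasCompactSupport hsupp

private lemma aux_integral_fderiv_eq_zero {n : ℕ} {w : (Fin n → ℝ) → ℝ}
    (hw : ContDiff ℝ 1 w) (hwc : HasCompactSupport w) (v : Fin n → ℝ) :
    ∫ x, fderiv ℝ w x v = 0 := by
  have H := integral_mul_fderiv_eq_neg_fderiv_mul_of_integrable
    (f := fun _ : Fin n → ℝ => (1 : ℝ)) (g := w) (v := v)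
    (by simp [fderiv_fun_const]) (by simpa using fderiv_dir_integrable hw hwc v)
    (by simpa using (hw.continuous).integrable_of_hasCompactSupport hwc)
    (fun x _ => differentiableAt_const (1 : ℝ)) (fun x _ => hw.differentiable one_ne_zero x)
  simpa [fderiv_fun_const] using H

section Main

variable {d : ℕ}

private def e0 (d : ℕ) : Fin (d + 1) → ℝ := Pi.single 0 1
private def ee (k : Fin d) : Fin (d + 1) → ℝ := Pi.single k.succ 1

private lemma e0_apply (k : Fin d) : e0 d k.succ = 0 :=
  Pi.single_eq_of_ne (Fin.succ_ne_zero k) 1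

private lemma ee_apply (k : Fin d) : ee k k.succ = 1 := Pi.single_eq_same _ _

private noncomputable def Afun (f g : (Fin (d + 1) → ℝ) → ℝ) : (Fin (d + 1) → ℝ) → ℝ :=
  fun x => ∑ k : Fin d, x k.succ *
    (f x * fderiv ℝ g x (ee k) - g x * fderiv ℝ f x (ee k))

private noncomputable def Cfun (f g : (Fin (d + 1) → ℝ) → ℝ) : (Fin (d + 1) → ℝ) → ℝ :=
  fun x => g x * fderiv ℝ f x (e0 d) - f x * fderiv ℝ g x (e0 d)

variable {f g : (Fin (d + 1) → ℝ) → ℝ}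

private lemma A_smooth (hf : ContDiff ℝ (⊤ : ℕ∞) f) (hg : ContDiff ℝ (⊤ : ℕ∞) g) :
    ContDiff ℝ (⊤ : ℕ∞) (Afun f g) := by
  apply ContDiff.sum fun k _ => ?_
  exact ((ContinuousLinearMap.proj k.succ :
      (Fin (d + 1) → ℝ) →L[ℝ] ℝ).contDiff).mul
    ((hf.mul (contDiff_top_fderiv_apply hg (ee k))).sub
      (hg.mul (contDiff_top_fderiv_apply hf (ee k))))

private lemma C_smooth (hf : ContDiff ℝ (⊤ : ℕ∞) f) (hg : ContDiff ℝ (⊤ : ℕ∞) g) :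
    ContDiff ℝ (⊤ : ℕ∞) (Cfun f g) :=
  (hg.mul (contDiff_top_fderiv_apply hf (e0 d))).sub
    (hf.mul (contDiff_top_fderiv_apply hg (e0 d)))

private lemma A_zero {x : Fin (d + 1) → ℝ} (hx : x ∉ tsupport f) : Afun f g x = 0 := by
  have h1 : f x = 0 := image_eq_zero_of_notMem_tsupport hx
  have h2 : fderiv ℝ f x = 0 :=
    notMem_support.mp fun hs => hx (support_fderiv_subset ℝ hs)
  simp [Afun, h1, h2]

private lemma C_zero {x : Fin (d + 1) → ℝ} (hx : x ∉ tsupport f) : Cfun f g x = 0 := by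
  have h1 : f x = 0 := image_eq_zero_of_notMem_tsupport hx
  have h2 : fderiv ℝ f x = 0 :=
    notMem_support.mp fun hs => hx (support_fderiv_subset ℝ hs)
  simp [Cfun, h1, h2]

/-- derivative of `A` in direction `e0`. -/
private lemma DA (hf : ContDiff ℝ (⊤ : ℕ∞) f) (hg : ContDiff ℝ (⊤ : ℕ∞) g) (x : Fin (d + 1) → ℝ) :
    fderiv ℝ (Afun f g) x (e0 d) =
      (∑ k : Fin d, x k.succ *
        (fderiv ℝ f x (e0 d) * fderiv ℝ g x (ee k) -
          fderiv ℝ f x (ee k) * fderiv ℝ g x (e0 d))) +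
      ∑ k : Fin d, x k.succ *
        (f x * fderiv ℝ (fun y => fderiv ℝ g y (ee k)) x (e0 d) -
          g x * fderiv ℝ (fun y => fderiv ℝ f y (ee k)) x (e0 d)) := by
  have hf' : Differentiable ℝ f := hf.differentiable (by simp)
  have hg' : Differentiable ℝ g := hg.differentiable (by simp)
  have hDf : ∀ v, Differentiable ℝ (fun y => fderiv ℝ f y v) := fun v =>
    (contDiff_top_fderiv_apply hf v).differentiable (by simp)
  have hDg : ∀ v, Differentiable ℝ (fun y => fderiv ℝ g y v) := fun v =>
    (contDiff_top_fderiv_apply hg v).differentiable (by simp)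
  have hinner : ∀ k : Fin d, DifferentiableAt ℝ
      (fun y => f y * fderiv ℝ g y (ee k) - g y * fderiv ℝ f y (ee k)) x := fun k =>
    ((hf' x).mul (hDg (ee k) x)).sub ((hg' x).mul (hDf (ee k) x))
  have h1 : fderiv ℝ (Afun f g) x (e0 d) = ∑ k : Fin d,
      fderiv ℝ (fun y => y k.succ *
        (f y * fderiv ℝ g y (ee k) - g y * fderiv ℝ f y (ee k))) x (e0 d) :=
    Dsum fun k _ => (diffproj k.succ x).mul (hinner k)
  have h2 : ∀ k : Fin d, fderiv ℝ (fun y => y k.succ *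
      (f y * fderiv ℝ g y (ee k) - g y * fderiv ℝ f y (ee k))) x (e0 d) =
      x k.succ * ((fderiv ℝ f x (e0 d) * fderiv ℝ g x (ee k) +
          f x * fderiv ℝ (fun y => fderiv ℝ g y (ee k)) x (e0 d)) -
        (fderiv ℝ g x (e0 d) * fderiv ℝ f x (ee k) +
          g x * fderiv ℝ (fun y => fderiv ℝ f y (ee k)) x (e0 d))) := by
    intro k
    rw [Dmul (diffproj k.succ x) (hinner k), Dproj, e0_apply,
      Dsub ((hf' x).fun_mul (hDg (ee k) x)) ((hg' x).fun_mul (hDf (ee k) x)),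
      Dmul (hf' x) (hDg (ee k) x), Dmul (hg' x) (hDf (ee k) x)]
    ring
  rw [h1, ← Finset.sum_add_distrib]
  exact Finset.sum_congr rfl fun k _ => by rw [h2 k]; ring

/-- derivative of `C` in direction `ee k`, after symmetrizing second derivatives. -/
private lemma DC (hf : ContDiff ℝ (⊤ : ℕ∞) f) (hg : ContDiff ℝ (⊤ : ℕ∞) g) (x : Fin (d + 1) → ℝ)
    (k : Fin d) :
    fderiv ℝ (Cfun f g) x (ee k) =
      (fderiv ℝ f x (e0 d) * fderiv ℝ g x (ee k) -
        fderiv ℝ f x (ee k) * fderiv ℝ g x (e0 d)) +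
      (g x * fderiv ℝ (fun y => fderiv ℝ f y (ee k)) x (e0 d) -
        f x * fderiv ℝ (fun y => fderiv ℝ g y (ee k)) x (e0 d)) := by
  have hf' : Differentiable ℝ f := hf.differentiable (by simp)
  have hg' : Differentiable ℝ g := hg.differentiable (by simp)
  have hDf : ∀ v, Differentiable ℝ (fun y => fderiv ℝ f y v) := fun v =>
    (contDiff_top_fderiv_apply hf v).differentiable (by simp)
  have hDg : ∀ v, Differentiable ℝ (fun y => fderiv ℝ g y v) := fun v =>
    (contDiff_top_fderiv_apply hg v).differentiable (by simp)
  have h1 : fderiv ℝ (Cfun f g) x (ee k) =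
      fderiv ℝ (fun y => g y * fderiv ℝ f y (e0 d)) x (ee k) -
      fderiv ℝ (fun y => f y * fderiv ℝ g y (e0 d)) x (ee k) :=
    Dsub ((hg' x).mul (hDf (e0 d) x)) ((hf' x).mul (hDg (e0 d) x))
  rw [h1, Dmul (hg' x) (hDf (e0 d) x), Dmul (hf' x) (hDg (e0 d) x),
    Dswap hf x (ee k) (e0 d), Dswap hg x (ee k) (e0 d)]
  ring

end Main

open MeasureTheory

/-- if `h` is C¹ on `U = ℝ × (ℝ^d ∖ {0})` with `∂₀h = 0` and
`Σ_k x^k ∂_k h = −d·h` on `U`, then for all smooth compactly supported `f, g`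
with support in `U`, `∫_U h·Σ_k x^k (∂₀f ∂_k g − ∂_k f ∂₀g) dx = 0`. -/
theorem first_order_cyclicity (d : ℕ) (hd : 1 ≤ d)
    (U : Set (Fin (d + 1) → ℝ))
    (hU : U = {x : Fin (d + 1) → ℝ | ∃ k : Fin d, x k.succ ≠ 0})
    (h : (Fin (d + 1) → ℝ) → ℝ)
    (hh : ContDiffOn ℝ 1 h U)
    (hh0 : ∀ x ∈ U, fderiv ℝ h x (Pi.single (0 : Fin (d + 1)) 1) = 0)
    (hhk : ∀ x ∈ U,
      ∑ k : Fin d, x k.succ * fderiv ℝ h x (Pi.single k.succ 1) = -(d : ℝ) * h x)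
    (f g : (Fin (d + 1) → ℝ) → ℝ)
    (hf : ContDiff ℝ (⊤ : ℕ∞) f) (hg : ContDiff ℝ (⊤ : ℕ∞) g)
    (hfc : HasCompactSupport f) (hgc : HasCompactSupport g)
    (hfU : tsupport f ⊆ U) (hgU : tsupport g ⊆ U) :
    ∫ x in U, h x * ∑ k : Fin d, x k.succ *
      (fderiv ℝ f x (Pi.single (0 : Fin (d + 1)) 1) *
          fderiv ℝ g x (Pi.single k.succ 1) -
        fderiv ℝ f x (Pi.single k.succ 1) *
          fderiv ℝ g x (Pi.single (0 : Fin (d + 1)) 1)) = 0 := by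
  have he0 : (Pi.single (0 : Fin (d + 1)) (1 : ℝ)) = e0 d := rfl
  have hee : ∀ k : Fin d, (Pi.single k.succ (1 : ℝ) : Fin (d + 1) → ℝ) = ee k :=
    fun _ => rfl
  simp only [he0, hee]
  -- the integrand
  set S : (Fin (d + 1) → ℝ) → ℝ := fun x => ∑ k : Fin d, x k.succ *
    (fderiv ℝ f x (e0 d) * fderiv ℝ g x (ee k) -
      fderiv ℝ f x (ee k) * fderiv ℝ g x (e0 d)) with hS
  -- openness of U
  have hUopen : IsOpen U := by
    rw [hU]
    have : {x : Fin (d + 1) → ℝ | ∃ k : Fin d, x k.succ ≠ 0} =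
        ⋃ k : Fin d, (fun x : Fin (d + 1) → ℝ => x k.succ) ⁻¹' {(0 : ℝ)}ᶜ := by
      ext x; simp [Set.mem_iUnion]
    rw [this]
    exact isOpen_iUnion fun k =>
      (continuous_apply k.succ).isOpen_preimage _ isOpen_compl_singleton
  -- basic facts about f,g derivative vanishing off supports
  have hfd0 : ∀ x ∉ tsupport f, fderiv ℝ f x = 0 := fun x hx =>
    notMem_support.mp fun hs => hx (support_fderiv_subset ℝ hs)
  have hf0 : ∀ x ∉ tsupport f, f x = 0 := fun x hx => image_eq_zero_of_notMem_tsupport hx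
  -- step 1 : the integral over U equals the integral over everything
  rw [setIntegral_eq_integral_of_forall_compl_eq_zero (fun x hx => by
    have hxf : x ∉ tsupport f := fun hc => hx (hfU hc)
    simp [hS, hfd0 x hxf])]
  -- the vector field
  set W0 : (Fin (d + 1) → ℝ) → ℝ := fun y => h y * Afun f g y with hW0
  set Wk : Fin d → (Fin (d + 1) → ℝ) → ℝ :=
    fun k y => h y * (y k.succ * Cfun f g y) with hWk
  have hA := A_smooth hf hg
  have hC := C_smooth hf hg
  -- regularity of the vector field
  have hW0cd : ContDiff ℝ 1 W0 := by
    rw [contDiff_iff_contDiffAt]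
    intro x
    by_cases hx : x ∈ U
    · exact (hh.contDiffAt (hUopen.mem_nhds hx)).mul (hA.of_le (by simp)).contDiffAt
    · have hxf : x ∉ tsupport f := fun hc => hx (hfU hc)
      have hev : W0 =ᶠ[nhds x] fun _ => (0 : ℝ) := by
        filter_upwards [(isClosed_tsupport f).isOpen_compl.mem_nhds hxf] with y hy
        simp [hW0, A_zero hy]
      exact (contDiffAt_const (c := 0)).congr_of_eventuallyEq hev
  have hWkcd : ∀ k, ContDiff ℝ 1 (Wk k) := by
    intro k
    rw [contDiff_iff_contDiffAt]
    intro x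
    by_cases hx : x ∈ U
    · exact (hh.contDiffAt (hUopen.mem_nhds hx)).mul
        ((((ContinuousLinearMap.proj k.succ :
            (Fin (d + 1) → ℝ) →L[ℝ] ℝ).contDiff.mul hC).of_le (by simp)).contDiffAt)
    · have hxf : x ∉ tsupport f := fun hc => hx (hfU hc)
      have hev : Wk k =ᶠ[nhds x] fun _ => (0 : ℝ) := by
        filter_upwards [(isClosed_tsupport f).isOpen_compl.mem_nhds hxf] with y hy
        simp [hWk, C_zero hy]
      exact (contDiffAt_const (c := 0)).congr_of_eventuallyEq hev
  have hW0c : HasCompactSupport W0 :=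
    HasCompactSupport.intro hfc fun x hx => by simp [hW0, A_zero hx]
  have hWkc : ∀ k, HasCompactSupport (Wk k) := fun k =>
    HasCompactSupport.intro hfc fun x hx => by simp [hWk, C_zero hx]
  -- step 2 : integral of the divergence vanishes
  have hdiv : ∫ x, (fderiv ℝ W0 x (e0 d) + ∑ k : Fin d, fderiv ℝ (Wk k) x (ee k)) = 0 := by
    rw [integral_add (fderiv_dir_integrable hW0cd hW0c (e0 d))
      (integrable_finset_sum _ fun k _ => fderiv_dir_integrable (hWkcd k) (hWkc k) (ee k)),
      integral_finset_sum _ fun k _ => fderiv_dir_integrable (hWkcd k) (hWkc k) (ee k)]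
    rw [aux_integral_fderiv_eq_zero hW0cd hW0c (e0 d)]
    rw [Finset.sum_congr rfl fun k _ => aux_integral_fderiv_eq_zero (hWkcd k) (hWkc k) (ee k)]
    simp
  -- step 3 : pointwise divergence identity
  have hpt : ∀ x, fderiv ℝ W0 x (e0 d) + ∑ k : Fin d, fderiv ℝ (Wk k) x (ee k) =
      2 * (h x * S x) := by
    intro x
    by_cases hx : x ∈ U
    · have hhx : DifferentiableAt ℝ h x :=
        (hh.contDiffAt (hUopen.mem_nhds hx)).differentiableAt one_ne_zero
      have hAx : DifferentiableAt ℝ (Afun f g) x := (hA.differentiable (by simp)) x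
      have hCx : DifferentiableAt ℝ (Cfun f g) x := (hC.differentiable (by simp)) x
      -- derivative of W0
      have e1 : fderiv ℝ W0 x (e0 d) = h x * fderiv ℝ (Afun f g) x (e0 d) := by
        have hh0' : fderiv ℝ h x (e0 d) = 0 := he0 ▸ hh0 x hx
        rw [hW0, Dmul hhx hAx, hh0']
        ring
      -- derivative of Wk k
      have e2 : ∀ k : Fin d, fderiv ℝ (Wk k) x (ee k) =
          fderiv ℝ h x (ee k) * (x k.succ * Cfun f g x) +
            h x * (Cfun f g x + x k.succ * fderiv ℝ (Cfun f g) x (ee k)) := by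
        intro k
        rw [hWk]
        rw [Dmul hhx ((diffproj k.succ x).fun_mul hCx), Dmul (diffproj k.succ x) hCx,
          Dproj, ee_apply]
        ring
      -- Euler identity for h
      have hEuler : ∑ k : Fin d, x k.succ * fderiv ℝ h x (ee k) = -(d : ℝ) * h x := by
        have := hhk x hx
        simpa [hee] using this
      -- assemble
      rw [e1, DA hf hg x, Finset.sum_congr rfl fun k _ => e2 k]
      rw [Finset.sum_add_distrib]
      have e3 : ∑ k : Fin d, fderiv ℝ h x (ee k) * (x k.succ * Cfun f g x) =
          (-(d : ℝ) * h x) * Cfun f g x := by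
        rw [← hEuler, Finset.sum_mul]
        exact Finset.sum_congr rfl fun k _ => by ring
      have e4 : ∑ k : Fin d, h x * (Cfun f g x + x k.succ * fderiv ℝ (Cfun f g) x (ee k)) =
          (d : ℝ) * (h x * Cfun f g x) +
            h x * ∑ k : Fin d, x k.succ * fderiv ℝ (Cfun f g) x (ee k) := by
        rw [Finset.sum_congr rfl (fun k _ => mul_add (h x) (Cfun f g x) _),
          Finset.sum_add_distrib, Finset.sum_const, Finset.card_univ, Fintype.card_fin,
          ← Finset.mul_sum]
        simp [nsmul_eq_mul]
      rw [e3, e4]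
      have e5 : ∑ k : Fin d, x k.succ * fderiv ℝ (Cfun f g) x (ee k) =
          S x - ∑ k : Fin d, x k.succ *
            (f x * fderiv ℝ (fun y => fderiv ℝ g y (ee k)) x (e0 d) -
              g x * fderiv ℝ (fun y => fderiv ℝ f y (ee k)) x (e0 d)) := by
        rw [hS, ← Finset.sum_sub_distrib]
        exact Finset.sum_congr rfl fun k _ => by rw [DC hf hg x k]; ring
      rw [e5, hS]
      ring
    · -- off U everything vanishes
      have hxf : x ∉ tsupport f := fun hc => hx (hfU hc)
      have hmem := (isClosed_tsupport f).isOpen_compl.mem_nhds hxf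
      have hevW0 : W0 =ᶠ[nhds x] fun _ => (0 : ℝ) := by
        filter_upwards [hmem] with y hy; simp [hW0, A_zero hy]
      have hevWk : ∀ k : Fin d, Wk k =ᶠ[nhds x] fun _ => (0 : ℝ) := by
        intro k; filter_upwards [hmem] with y hy; simp [hWk, C_zero hy]
      have d0 : fderiv ℝ W0 x = 0 := by
        rw [hevW0.fderiv_eq]; exact fderiv_const_apply 0
      have dk : ∀ k : Fin d, fderiv ℝ (Wk k) x = 0 := fun k => by
        rw [(hevWk k).fderiv_eq]; exact fderiv_const_apply 0
      simp [d0, dk, hS, hfd0 x hxf]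
  -- conclude
  have h2 : ∫ x, (2 : ℝ) * (h x * S x) = 0 := by
    rw [← hdiv]
    exact integral_congr_ae (Filter.Eventually.of_forall fun x => (hpt x).symm)
  rw [integral_const_mul] at h2
  have := h2
  linarith [this]
end
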